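/- arXiv:1409.6881 — 2 statements merged into one kernel-verified Lean document; each statement's English description precedes it below -/
import Mathlib

section
/- Define φ₀(x, y) to hold iff for all e ≤ x, if the e-th partial computable function φ_e halts on input x, then y > φ_e(x). Then for every x there exists y such that φ₀(x, y) holds, but there is no computable function F : ℕ → List ℕ such that for every x some y in F(x) satisfies φ₀(x, y). -/
/-!
Existence: only the finitely many indices `e ≤ x` matter, and each `φ_e(x)` has at most one
value, so some `y` exceeds all of them.

Non-existence: from a computable `F` one gets the computable bound `G x := (F x).sum`, which
still witnesses `φ₀` because `φ₀(x, ·)` is upward closed. Diagonalize: `G` is `φ_e` for some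
index `e`, and `φ₀(e, G e)` applied to `e ≤ e` gives `G e < G e`.
-/

open Nat.Partrec (Code)

/-- The e-th partial computable function. -/
noncomputable def phiE (e : ℕ) : ℕ →. ℕ := (Denumerable.ofNat Code e).eval

/-- φ₀(x,y): for all e ≤ x, if φ_e(x) halts then y > φ_e(x). -/
def phi0 (x y : ℕ) : Prop := ∀ e : ℕ, e ≤ x → ∀ v : ℕ, v ∈ phiE e x → v < y

theorem Part.exists_forall_mem_lt {ι α : Type*} [LinearOrder α] [NoMaxOrder α] [Nonempty α]
    (p : ι → Part α) {s : Set ι} (hs : s.Finite) : ∃ y, ∀ e ∈ s, ∀ v ∈ p e, v < y := by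
  have hfin : (⋃ e ∈ s, {v | v ∈ p e}).Finite :=
    hs.biUnion fun e _ => Set.Subsingleton.finite fun _ h _ h' => Part.mem_unique h h'
  obtain ⟨b, hb⟩ := hfin.bddAbove
  obtain ⟨y, hy⟩ := exists_gt b
  exact ⟨y, fun e he v hv => (hb (Set.mem_biUnion he hv)).trans_lt hy⟩

theorem Primrec.nat_list_sum : Primrec (List.sum : List ℕ → ℕ) :=
  (list_foldr .id (const 0) (nat_add.comp (fst.comp snd) (snd.comp snd)).to₂).of_eq
    fun _ => List.sum_eq_foldr.symm

theorem exists_phiE_eq_of_computable {G : ℕ → ℕ} (hG : Computable G) :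
    ∃ e, ∀ x, phiE e x = Part.some (G x) := by
  obtain ⟨c, hc⟩ := Nat.Partrec.Code.exists_code.1 (Partrec.nat_iff.1 hG.partrec)
  exact ⟨Encodable.encode c, fun x => by simp [phiE, Denumerable.ofNat_encode, hc]⟩

theorem exists_phi0 (x : ℕ) : ∃ y, phi0 x y := by
  obtain ⟨y, hy⟩ := Part.exists_forall_mem_lt (fun e => phiE e x) (Set.finite_Iic x)
  exact ⟨y, fun e he => hy e he⟩

theorem phi0.mono {x y y' : ℕ} (h : phi0 x y) (hy : y ≤ y') : phi0 x y' :=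
  fun e he v hv => (h e he v hv).trans_le hy

theorem Computable.exists_not_phi0 {G : ℕ → ℕ} (hG : Computable G) : ∃ x, ¬ phi0 x (G x) := by
  obtain ⟨e, he⟩ := exists_phiE_eq_of_computable hG
  exact ⟨e, fun h => lt_irrefl _ (h e le_rfl (G e) (by rw [he]; exact Part.mem_some _))⟩

/-- For every x there is a y with φ₀(x,y), but no computable Herbrand
list-valued choice function produces witnesses. -/
theorem herbrand_choice_fails :
    (∀ x : ℕ, ∃ y : ℕ, phi0 x y) ∧
    ¬ ∃ F : ℕ → List ℕ, Computable F ∧ ∀ x : ℕ, ∃ y ∈ F x, phi0 x y := by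
  refine ⟨exists_phi0, ?_⟩
  rintro ⟨F, hF, hw⟩
  have hsum : ∀ x, phi0 x (F x).sum := fun x => by
    obtain ⟨y, hy, hphi⟩ := hw x
    exact hphi.mono (List.le_sum_of_mem hy)
  obtain ⟨x, hx⟩ := Computable.exists_not_phi0 (Primrec.nat_list_sum.to_comp.comp hF)
  exact hx (hsum x)
end

section
/- If there exists ν : (ℕ → ℕ) → (ℕ → ℕ) such that for all f, (∃g, ∀x, f(g↾x) = 0) → ∀x, f((ν f)↾x) = 0, then there exists μ : (ℕ → ℕ) → ℕ such that for all f, (∃x, f(x) = 0) → f(μ(f)) = 0. -/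
/-!
Let `T_f` be the tree of finite sequences whose first entry (if any) is a zero of `f`.
If `f a = 0` then the constant sequence `a, a, …` is a branch of `T_f`, so `ν` returns a branch
of `T_f`; the first entry of that branch is then a zero of `f`, and we take it as `μ f`.
-/

/-- `initSeg g x` codes the finite initial segment `(g 0, …, g (x-1))`. -/
def initSeg (g : ℕ → ℕ) (x : ℕ) : ℕ :=
  Encodable.encode (List.ofFn (fun i : Fin x => g i))

/-- The tree `T_f`, as a function vanishing exactly on its members; codes that do not decode to a
list count as members, which is harmless since `initSeg` only produces codes of lists. -/
def zeroSearchTree (f : ℕ → ℕ) (c : ℕ) : ℕ :=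
  match Encodable.decode (α := List ℕ) c with
  | some (a :: _) => f a
  | _ => 0

theorem decode_initSeg (g : ℕ → ℕ) (x : ℕ) :
    Encodable.decode (α := List ℕ) (initSeg g x) = some (List.ofFn fun i : Fin x => g i) :=
  Encodable.encodek _

theorem zeroSearchTree_initSeg_zero (f g : ℕ → ℕ) : zeroSearchTree f (initSeg g 0) = 0 := by
  rw [zeroSearchTree, decode_initSeg, List.ofFn_zero]

theorem zeroSearchTree_initSeg_succ (f g : ℕ → ℕ) (x : ℕ) :
    zeroSearchTree f (initSeg g (x + 1)) = f (g 0) := by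
  rw [zeroSearchTree, decode_initSeg, List.ofFn_succ]
  rfl

theorem zeroSearchTree_initSeg_const {f : ℕ → ℕ} {a : ℕ} (ha : f a = 0) (x : ℕ) :
    zeroSearchTree f (initSeg (fun _ => a) x) = 0 := by
  cases x with
  | zero => exact zeroSearchTree_initSeg_zero f _
  | succ x => rw [zeroSearchTree_initSeg_succ, ha]

/-- The Π¹₁ witnessing functional (ν) yields the μ-operator (μ²). -/
theorem nu_implies_mu
    (h : ∃ ν : (ℕ → ℕ) → (ℕ → ℕ), ∀ f : ℕ → ℕ,
        (∃ g : ℕ → ℕ, ∀ x : ℕ, f (initSeg g x) = 0) →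
          ∀ x : ℕ, f (initSeg (ν f) x) = 0) :
    ∃ μ : (ℕ → ℕ) → ℕ, ∀ f : ℕ → ℕ, (∃ x, f x = 0) → f (μ f) = 0 := by
  obtain ⟨ν, hν⟩ := h
  refine ⟨fun f => ν (zeroSearchTree f) 0, fun f ⟨a, ha⟩ => ?_⟩
  have hbranch := hν (zeroSearchTree f) ⟨fun _ => a, zeroSearchTree_initSeg_const ha⟩ 1
  rwa [zeroSearchTree_initSeg_succ] at hbranch
end
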